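/- Let G be a prodiscrete topological group, and let G^∧ = Aut(F_G) be its prodiscrete completion, equipped with the group topology whose open subgroups are exactly the subgroups U_{X,x}. Then the map U ↦ ι_G⁻¹(U) is a bijection from the set of open subgroups of G^∧ to the set of open subgroups of G; this bijection sends normal subgroups to normal subgroups; and for every open subgroup U ⊆ G^∧, the map induced by ι_G from the coset space G/ι_G⁻¹(U) to the coset space G^∧/U is a bijection. In particular, ι_G : G → G^∧ is continuous. -/

import Mathlib

open CategoryTheory

universe u

namespace ProdiscreteCompletion

variable (G : Type u) [Group G] [TopologicalSpace G]

/-- The category `G-Set` of continuous discrete `G`-sets: `G`-sets in which the stabilizer of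
every point is an open subgroup of `G` (equivalently, the action map is continuous for the
discrete topology on the set). -/
abbrev ContGSet :=
  ObjectProperty.FullSubcategory (fun X : Action (Type u) G =>
    ∀ x : X.V, IsOpen {g : G | X.ρ g x = x})

/-- The forgetful functor `F_G : G-Set ⥤ Set` on continuous discrete `G`-sets. -/
abbrev forgetContGSet : ContGSet G ⥤ Type u :=
  ObjectProperty.ι _ ⋙ Action.forget _ _

variable {G}

/-- For `g : G`, the natural automorphism of the forgetful functor whose component at each
continuous discrete `G`-set `X` is the action of `g` on `X`. -/
def iotaIso (g : G) : forgetContGSet G ≅ forgetContGSet G :=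
  NatIso.ofComponents
    (fun X => Equiv.toIso
      { toFun := X.obj.ρ g
        invFun := X.obj.ρ g⁻¹
        left_inv := fun x => by
          have h : X.obj.ρ (g⁻¹ * g) x = X.obj.ρ g⁻¹ (X.obj.ρ g x) :=
            ConcreteCategory.congr_hom (X.obj.ρ.map_mul g⁻¹ g) x
          rw [inv_mul_cancel, map_one] at h
          exact h.symm
        right_inv := fun x => by
          have h : X.obj.ρ (g * g⁻¹) x = X.obj.ρ g (X.obj.ρ g⁻¹ x) :=
            ConcreteCategory.congr_hom (X.obj.ρ.map_mul g g⁻¹) x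
          rw [mul_inv_cancel, map_one] at h
          exact h.symm })
    (fun {X Y} f => by ext x; exact (ConcreteCategory.congr_hom (f.hom.comm g) x).symm)

variable (G)

/-- The canonical group homomorphism `ι_G : G → G^∧ = Aut (F_G)` sending `g ∈ G` to the
natural automorphism of the forgetful functor acting by `g` on each continuous discrete
`G`-set. -/
def iota : G →* Aut (forgetContGSet G) where
  toFun := iotaIso
  map_one' := by
    ext X x
    show (iotaIso 1).hom.app X x = _
    simp [iotaIso]
    rfl
  map_mul' g₁ g₂ := by
    ext X x
    have h : X.obj.ρ (g₁ * g₂) x = X.obj.ρ g₁ (X.obj.ρ g₂ x) :=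
      ConcreteCategory.congr_hom (X.obj.ρ.map_mul g₁ g₂) x
    exact h

variable {G}

/-- The stabilizer subgroup `U_{X,x} ⊆ Aut (F_G)` of a point `x` of a continuous discrete
`G`-set `X`. -/
def USub (X : ContGSet G) (x : X.obj.V) : Subgroup (Aut (forgetContGSet G)) where
  carrier := {γ | γ.hom.app X x = x}
  one_mem' := rfl
  mul_mem' := by
    intro γ δ hγ hδ
    show (γ * δ).hom.app X x = x
    rw [Aut.Aut_mul_def]
    show γ.hom.app X (δ.hom.app X x) = x
    rw [show δ.hom.app X x = x from hδ]
    exact hγ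
  inv_mem' := by
    intro γ hγ
    show γ⁻¹.hom.app X x = x
    conv_lhs => rw [← show γ.hom.app X x = x from hγ]
    rw [Aut.Aut_inv_def]
    exact ConcreteCategory.congr_hom (congrArg (fun τ : forgetContGSet G ⟶ forgetContGSet G => τ.app X)
      γ.hom_inv_id) x


end ProdiscreteCompletion

/-!
A continuous discrete `G`-set is covered by coset spaces: the orbit map `G ⧸ Stab(x) → X` is an
injective morphism of `G`-sets, so by naturality an automorphism `γ` of the fibre functor moves
`x` exactly as it moves the base point of `G ⧸ Stab(x)`; in particular `γ x = g • x` for some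
`g : G`. Hence `U_{X,x}` depends only on `Stab(x) = ι⁻¹(U_{X,x})`, and `ι(G)` meets every left
coset of `U_{X,x}`, which gives the bijection of coset spaces. If `Stab(x)` is normal, conjugating
by `ι g` replaces `x` by `g⁻¹ • x`, a point with the same stabilizer, so `ι(G)` normalises
`U_{X,x}`; together with `ι(G) U_{X,x} = G^∧` this makes `U_{X,x}` normal.
-/

section CosetsMeetingRange

variable {G A : Type*} [Group G] [Group A] (φ : G →* A) {K : Subgroup A}

theorem Subgroup.normal_of_forall_exists_inv_mul_mem (hφK : ∀ a, ∃ g, (φ g)⁻¹ * a ∈ K)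
    (hnorm : ∀ g, φ g ∈ Subgroup.normalizer (K : Set A)) : K.Normal := by
  refine Subgroup.normalizer_eq_top_iff.mp (eq_top_iff.mpr fun a _ => ?_)
  obtain ⟨g, hg⟩ := hφK a
  simpa using mul_mem (hnorm g) (Subgroup.le_normalizer hg)

theorem QuotientGroup.exists_bijective_comap_of_forall_exists_inv_mul_mem
    (hφK : ∀ a, ∃ g, (φ g)⁻¹ * a ∈ K) :
    ∃ e : G ⧸ K.comap φ → A ⧸ K,
      (∀ g : G, e (QuotientGroup.mk g) = QuotientGroup.mk (φ g)) ∧ Function.Bijective e := by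
  refine ⟨Quotient.map' φ fun a b hab => ?_, fun _ => rfl, ?_, ?_⟩
  · rw [QuotientGroup.leftRel_apply] at hab ⊢
    simpa using hab
  · rintro ⟨a⟩ ⟨b⟩ h
    exact QuotientGroup.eq.mpr (by simpa using QuotientGroup.eq.mp h)
  · rintro ⟨a⟩
    obtain ⟨g, hg⟩ := hφK a
    exact ⟨g, QuotientGroup.eq.mpr hg⟩

end CosetsMeetingRange

theorem MonoidHom.continuous_of_isOpen_comap {A B : Type*} [Group A] [TopologicalSpace A]
    [IsTopologicalGroup A] [Group B] [TopologicalSpace B] [ContinuousMul B] (φ : A →* B)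
    (hB : (nhds (1 : B)).HasBasis (fun K : Subgroup B => IsOpen (K : Set B)) (fun K => (K : Set B)))
    (hφ : ∀ K : Subgroup B, IsOpen (K : Set B) → IsOpen (K.comap φ : Set A)) :
    Continuous φ := by
  refine continuous_of_continuousAt_one φ ?_
  rw [ContinuousAt, map_one, hB.tendsto_right_iff]
  exact fun K hK => (hφ K hK).mem_nhds (K.comap φ).one_mem

namespace ProdiscreteCompletion

variable {G : Type u} [Group G] [TopologicalSpace G]

instance (X : ContGSet G) : MulAction G X.obj.V := Action.instMulAction X.obj

theorem comap_iota_uSub (X : ContGSet G) (x : X.obj.V) :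
    (USub X x).comap (iota G) = MulAction.stabilizer G x := rfl

theorem iota_conj_mem_uSub_iff (g : G) (γ : Aut (forgetContGSet G)) (X : ContGSet G)
    (x : X.obj.V) : iota G g * γ * (iota G g)⁻¹ ∈ USub X x ↔ γ ∈ USub X (g⁻¹ • x) := by
  change X.obj.ρ g (γ.hom.app X (g⁻¹ • x)) = x ↔ γ.hom.app X (g⁻¹ • x) = g⁻¹ • x
  exact smul_eq_iff_eq_inv_smul g

variable [IsTopologicalGroup G]

def cosetGSet (H : Subgroup G) (hH : IsOpen (H : Set G)) : ContGSet G where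
  obj := Action.ofMulAction G (G ⧸ H)
  property q := by
    have := QuotientGroup.discreteTopology hH
    exact stabilizer_isOpen (X := G ⧸ H) G q

theorem comap_iota_uSub_cosetGSet (H : Subgroup G) (hH : IsOpen (H : Set G)) :
    (USub (cosetGSet H hH) ((1 : G) : G ⧸ H)).comap (iota G) = H :=
  MulAction.stabilizer_quotient H

def ofQuotientStabilizerHom (X : ContGSet G) (x : X.obj.V) :
    cosetGSet (MulAction.stabilizer G x) (X.property x) ⟶ X :=
  ObjectProperty.homMk
    { hom := TypeCat.ofHom (MulAction.ofQuotientStabilizer G x)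
      comm g := by ext q; exact MulAction.ofQuotientStabilizer_smul G x g q }

theorem hom_app_eq_ofQuotientStabilizer (γ : Aut (forgetContGSet G)) (X : ContGSet G)
    (x : X.obj.V) :
    γ.hom.app X x = MulAction.ofQuotientStabilizer G x
      (γ.hom.app (cosetGSet _ (X.property x)) ((1 : G) : G ⧸ MulAction.stabilizer G x)) := by
  have hnat := ConcreteCategory.congr_hom (γ.hom.naturality (ofQuotientStabilizerHom X x))
    ((1 : G) : G ⧸ MulAction.stabilizer G x)
  exact (congrArg (γ.hom.app X) (one_smul G x).symm).trans hnat

theorem exists_hom_app_eq_smul (γ : Aut (forgetContGSet G)) (X : ContGSet G) (x : X.obj.V) :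
    ∃ g : G, γ.hom.app X x = g • x := by
  obtain ⟨g, hg⟩ := QuotientGroup.mk_surjective
    (γ.hom.app (cosetGSet _ (X.property x)) ((1 : G) : G ⧸ MulAction.stabilizer G x))
  exact ⟨g, by rw [hom_app_eq_ofQuotientStabilizer, ← hg]; rfl⟩

theorem exists_inv_iota_mul_mem_uSub (γ : Aut (forgetContGSet G)) (X : ContGSet G)
    (x : X.obj.V) : ∃ g : G, (iota G g)⁻¹ * γ ∈ USub X x := by
  obtain ⟨g, hg⟩ := exists_hom_app_eq_smul γ X x
  refine ⟨g, ?_⟩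
  change X.obj.ρ g⁻¹ (γ.hom.app X x) = x
  rw [hg]
  exact inv_smul_smul g x

theorem uSub_eq_uSub_cosetGSet (X : ContGSet G) (x : X.obj.V) {H : Subgroup G}
    (hH : IsOpen (H : Set G)) (hx : MulAction.stabilizer G x = H) :
    USub X x = USub (cosetGSet H hH) ((1 : G) : G ⧸ H) := by
  subst hx
  ext γ
  change γ.hom.app X x = x ↔ γ.hom.app (cosetGSet _ hH) ((1 : G) : G ⧸ _) = _
  rw [hom_app_eq_ofQuotientStabilizer]
  exact (MulAction.injective_ofQuotientStabilizer G x).eq_iff' (one_smul G x)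

theorem uSub_eq_of_stabilizer_eq {X Y : ContGSet G} {x : X.obj.V} {y : Y.obj.V}
    (h : MulAction.stabilizer G x = MulAction.stabilizer G y) : USub X x = USub Y y := by
  rw [uSub_eq_uSub_cosetGSet X x (X.property x) rfl,
    uSub_eq_uSub_cosetGSet Y y (X.property x) h.symm]

theorem uSub_normal_of_stabilizer_normal {X : ContGSet G} {x : X.obj.V}
    (hx : (MulAction.stabilizer G x).Normal) : (USub X x).Normal := by
  refine Subgroup.normal_of_forall_exists_inv_mul_mem (iota G)
    (exists_inv_iota_mul_mem_uSub · X x) fun g => Subgroup.mem_normalizer_iff.mpr fun γ => ?_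
  have hstab : MulAction.stabilizer G (g⁻¹ • x) = MulAction.stabilizer G x := by
    rw [MulAction.stabilizer_smul_eq_stabilizer_map_conj, MulEquiv.toMonoidHom_eq_coe]
    exact Subgroup.Normal.map_conj_eq _ g⁻¹
  rw [iota_conj_mem_uSub_iff, uSub_eq_of_stabilizer_eq hstab]

theorem open_subgroup_correspondence_of_completion_general
    (G : Type u) [Group G] [TopologicalSpace G] [IsTopologicalGroup G]
    (t : TopologicalSpace (Aut (forgetContGSet G)))
    (ht : @IsTopologicalGroup (Aut (forgetContGSet G)) t _)
    (htop : ∀ K : Subgroup (Aut (forgetContGSet G)),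
      @IsOpen _ t (K : Set (Aut (forgetContGSet G))) ↔
        ∃ (X : ContGSet G) (x : X.obj.V), K = USub X x)
    (hbasis : (@nhds _ t 1).HasBasis
      (fun K : Subgroup (Aut (forgetContGSet G)) => @IsOpen _ t (K : Set (Aut (forgetContGSet G))))
      (fun K => (K : Set (Aut (forgetContGSet G))))) :
    Set.BijOn (fun K : Subgroup (Aut (forgetContGSet G)) => K.comap (iota G))
      {K : Subgroup (Aut (forgetContGSet G)) | @IsOpen _ t (K : Set (Aut (forgetContGSet G)))}
      {H : Subgroup G | IsOpen (H : Set G)} ∧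
    (∀ K : Subgroup (Aut (forgetContGSet G)),
      @IsOpen _ t (K : Set (Aut (forgetContGSet G))) →
        (K.Normal ↔ (K.comap (iota G)).Normal)) ∧
    (∀ K : Subgroup (Aut (forgetContGSet G)),
      @IsOpen _ t (K : Set (Aut (forgetContGSet G))) →
        ∃ e : G ⧸ K.comap (iota G) → Aut (forgetContGSet G) ⧸ K,
          (∀ g : G, e (QuotientGroup.mk g) = QuotientGroup.mk (iota G g)) ∧
          Function.Bijective e) ∧
    @Continuous G (Aut (forgetContGSet G)) _ t (iota G) := by
  let _ := t
  have hmaps : ∀ K : Subgroup (Aut (forgetContGSet G)),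
      IsOpen (K : Set (Aut (forgetContGSet G))) → IsOpen (K.comap (iota G) : Set G) := by
    intro K hK
    obtain ⟨X, x, rfl⟩ := (htop K).mp hK
    rw [comap_iota_uSub]
    exact X.property x
  refine ⟨⟨hmaps, ?_, ?_⟩, ?_, ?_, (iota G).continuous_of_isOpen_comap hbasis hmaps⟩
  · intro K₁ h₁ K₂ h₂ hcomap
    obtain ⟨X, x, rfl⟩ := (htop K₁).mp h₁
    obtain ⟨Y, y, rfl⟩ := (htop K₂).mp h₂
    simp only [comap_iota_uSub] at hcomap
    exact uSub_eq_of_stabilizer_eq hcomap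
  · intro H hH
    exact ⟨_, (htop _).mpr ⟨_, _, rfl⟩, comap_iota_uSub_cosetGSet H hH⟩
  · intro K hK
    obtain ⟨X, x, rfl⟩ := (htop K).mp hK
    exact ⟨fun hN => hN.comap _, uSub_normal_of_stabilizer_normal⟩
  · intro K hK
    obtain ⟨X, x, rfl⟩ := (htop K).mp hK
    exact QuotientGroup.exists_bijective_comap_of_forall_exists_inv_mul_mem (iota G)
      (exists_inv_iota_mul_mem_uSub · X x)

/-- Lemma `L:1` of the paper.  Let `G` be a prodiscrete topological group and
equip its prodiscrete completion `G^∧ = Aut (F_G)` with the group topology whose open subgroups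
are exactly the stabilizer subgroups `U_{X,x}`.  Then `U ↦ ι_G⁻¹(U)` is a bijection from the
open subgroups of `G^∧` to the open subgroups of `G`, this bijection matches up normal
subgroups with normal subgroups, and for every open `U ⊆ G^∧` the map induced by `ι_G` on coset
spaces `G/ι_G⁻¹(U) → G^∧/U` is a bijection.  In particular, `ι_G` is continuous. -/
theorem open_subgroup_correspondence_of_completion
    (G : Type u) [Group G] [TopologicalSpace G] [IsTopologicalGroup G]
    (hG : (nhds (1 : G)).HasBasis (fun H : Subgroup G => IsOpen (H : Set G))
      (fun H : Subgroup G => (H : Set G)))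
    (t : TopologicalSpace (Aut (forgetContGSet G)))
    (ht : @IsTopologicalGroup (Aut (forgetContGSet G)) t _)
    (htop : ∀ K : Subgroup (Aut (forgetContGSet G)),
      @IsOpen _ t (K : Set (Aut (forgetContGSet G))) ↔
        ∃ (X : ContGSet G) (x : X.obj.V), K = USub X x)
    (hbasis : (@nhds _ t 1).HasBasis
      (fun K : Subgroup (Aut (forgetContGSet G)) => @IsOpen _ t (K : Set (Aut (forgetContGSet G))))
      (fun K => (K : Set (Aut (forgetContGSet G))))) :
    Set.BijOn (fun K : Subgroup (Aut (forgetContGSet G)) => K.comap (iota G))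
      {K : Subgroup (Aut (forgetContGSet G)) | @IsOpen _ t (K : Set (Aut (forgetContGSet G)))}
      {H : Subgroup G | IsOpen (H : Set G)} ∧
    (∀ K : Subgroup (Aut (forgetContGSet G)),
      @IsOpen _ t (K : Set (Aut (forgetContGSet G))) →
        (K.Normal ↔ (K.comap (iota G)).Normal)) ∧
    (∀ K : Subgroup (Aut (forgetContGSet G)),
      @IsOpen _ t (K : Set (Aut (forgetContGSet G))) →
        ∃ e : G ⧸ K.comap (iota G) → Aut (forgetContGSet G) ⧸ K,
          (∀ g : G, e (QuotientGroup.mk g) = QuotientGroup.mk (iota G g)) ∧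
          Function.Bijective e) ∧
    @Continuous G (Aut (forgetContGSet G)) _ t (iota G) :=
  open_subgroup_correspondence_of_completion_general G t ht htop hbasis

end ProdiscreteCompletion
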